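/- Let F be a totally ordered field of characteristic 0 and (V, Π) an irreducible system of simple roots over F, with Π = {α₁,…,α_n}. Then the values S(α_i, α_i) for i = 1,…,n all have the same sign: either S(α_i, α_i) > 0 for all i, or S(α_i, α_i) < 0 for all i. -/

import Mathlib

/-!
Along an edge `S(αᵢ, αⱼ) ≠ 0` both Cartan integers are negative, so `S(αᵢ, αᵢ)` and
`S(αⱼ, αⱼ)` both have the sign opposite to `S(αᵢ, αⱼ)`. Hence the sign of `S(α, α)` is
constant on connected components of the Dynkin graph, which is connected by irreducibility.
-/

theorem Set.forall_or_forall_not_of_connected {ι : Type*} {O : ι → ι → Prop} {P : ι → Prop}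
    (hirr : ∀ s : Set ι, s.Nonempty → (∀ i ∈ s, ∀ j ∉ s, O i j) → s = Set.univ)
    (hP : ∀ i j, ¬ O i j → P i → P j) :
    (∀ i, P i) ∨ ∀ i, ¬ P i := by
  by_cases h : ∃ i, P i
  · left
    have hs : {i | P i} = Set.univ :=
      hirr _ h fun i hi j hj => by_contra fun hij => hj (hP i j hij hi)
    exact Set.eq_univ_iff_forall.mp hs
  · exact Or.inr (not_exists.mp h)

section OrderedField

variable {F : Type*} [Field F] [LinearOrder F] [IsStrictOrderedRing F]

theorem pos_iff_neg_of_two_mul_div_nonpos {x a : F} (hx : x ≠ 0) (ha : a ≠ 0)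
    (h : 2 * x / a ≤ 0) : 0 < a ↔ x < 0 := by
  have hneg : x / a < 0 := by
    rw [mul_div_assoc] at h
    exact lt_of_le_of_ne (by linarith) (div_ne_zero hx ha)
  rcases div_neg_iff.mp hneg with ⟨hx, ha⟩ | ⟨hx, ha⟩
  · exact ⟨fun h => absurd h ha.not_gt, fun h => absurd h hx.not_gt⟩
  · exact ⟨fun _ => hx, fun _ => ha⟩

theorem nonpos_of_exists_eq_intCast {y : F} (h : ∃ m : ℤ, m ≤ 0 ∧ y = (m : F)) :
    y ≤ 0 := by
  obtain ⟨m, hm, rfl⟩ := h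
  exact_mod_cast hm

end OrderedField

theorem stmt_15 {F : Type*} [Field F] [LinearOrder F] [IsStrictOrderedRing F]
    {V : Type*} [AddCommGroup V] [Module F V]
    (S : LinearMap.BilinForm F V) (hS : ∀ x y, S x y = S y x)
    {n : ℕ} (b : Module.Basis (Fin n) F V)
    (hni : ∀ i, S (b i) (b i) ≠ 0)
    (hC : ∀ i j, i ≠ j → ∃ m : ℤ, m ≤ 0 ∧
      2 * S (b i) (b j) / S (b i) (b i) = (m : F))
    (hirr : ∀ s : Set (Fin n), s.Nonempty →
      (∀ i ∈ s, ∀ j ∉ s, S (b i) (b j) = 0) → s = Set.univ) :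
    (∀ i, 0 < S (b i) (b i)) ∨ (∀ i, S (b i) (b i) < 0) := by
  have hsign : ∀ i j, S (b i) (b j) ≠ 0 → 0 < S (b i) (b i) → 0 < S (b j) (b j) := by
    intro i j hij hi
    rcases eq_or_ne i j with rfl | hne
    · exact hi
    have hji : S (b j) (b i) ≠ 0 := hS (b i) (b j) ▸ hij
    have hCij := nonpos_of_exists_eq_intCast (hC i j hne)
    have hCji := nonpos_of_exists_eq_intCast (hC j i hne.symm)
    rwa [pos_iff_neg_of_two_mul_div_nonpos hji (hni j) hCji, hS,
      ← pos_iff_neg_of_two_mul_div_nonpos hij (hni i) hCij]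
  refine (Set.forall_or_forall_not_of_connected hirr hsign).imp_right fun h i => ?_
  exact lt_of_le_of_ne (not_lt.mp (h i)) (hni i)
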